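/- Up to scalar, the Klein quartic is the only invariant quartic: every homogeneous polynomial g ∈ ℂ[v₁, v₂, v₃] of degree 4 satisfying g∘P = g, g∘D = g and g∘T = g is a scalar multiple of f = v₁³v₂ + v₂³v₃ + v₃³v₁. -/

import Mathlib

/-! Invariance under `D` multiplies the coefficient of `v₁^a v₂^b v₃^c` by `ε^(a + 4b + 2c)`,
so only monomials with `7 ∣ a + 4b + 2c` occur in `g`. In degree 4 these are exactly
`v₁³v₂`, `v₂³v₃`, `v₃³v₁`, which `P` permutes cyclically; hence their coefficients in `g`
agree and `g` is a multiple of `f`. -/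

noncomputable section

open MvPolynomial

/-- `ε = exp(2πi/7)`. -/
noncomputable def ε : ℂ := Complex.exp (2 * Real.pi * Complex.I / 7)

noncomputable def lam₁ : ℂ := ε - ε ^ 6
noncomputable def lam₂ : ℂ := ε ^ 4 - ε ^ 3
noncomputable def lam₃ : ℂ := ε ^ 2 - ε ^ 5

/-- The Klein quartic f = v₁³v₂ + v₂³v₃ + v₃³v₁ (with v₁ = X 0, v₂ = X 1, v₃ = X 2). -/
noncomputable def fklein : MvPolynomial (Fin 3) ℂ :=
  X 0 ^ 3 * X 1 + X 1 ^ 3 * X 2 + X 2 ^ 3 * X 0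

/-- The cyclic substitution P : (v₁, v₂, v₃) ↦ (v₂, v₃, v₁). -/
noncomputable def Psub : Fin 3 → MvPolynomial (Fin 3) ℂ := ![X 1, X 2, X 0]

/-- The diagonal substitution D : (v₁, v₂, v₃) ↦ (ε v₁, ε⁴ v₂, ε² v₃). -/
noncomputable def Dsub : Fin 3 → MvPolynomial (Fin 3) ℂ :=
  ![ε • X 0, (ε ^ 4) • X 1, (ε ^ 2) • X 2]

/-- The substitution T given by the symmetric matrix (i/√7)·(λ's). -/
noncomputable def Tsub : Fin 3 → MvPolynomial (Fin 3) ℂ :=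
  ![(Complex.I / (Real.sqrt 7 : ℂ)) • (lam₁ • X 0 + lam₃ • X 1 + lam₂ • X 2),
    (Complex.I / (Real.sqrt 7 : ℂ)) • (lam₃ • X 0 + lam₂ • X 1 + lam₁ • X 2),
    (Complex.I / (Real.sqrt 7 : ℂ)) • (lam₂ • X 0 + lam₁ • X 1 + lam₃ • X 2)]

namespace MvPolynomial

variable {R σ : Type*} [CommSemiring R]

theorem aeval_smul_X_monomial (w : σ → R) (v : σ →₀ ℕ) (c : R) :
    aeval (fun i => w i • X i) (monomial v c) = monomial v ((v.prod fun i e => w i ^ e) * c) := by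
  rw [aeval_monomial, monomial_eq]
  simp only [smul_eq_C_mul, mul_pow, Finsupp.prod_mul, ← C_pow, algebraMap_eq, C_mul,
    ← map_finsuppProd C]
  ring

theorem coeff_aeval_smul_X (w : σ → R) (p : MvPolynomial σ R) (u : σ →₀ ℕ) :
    coeff u (aeval (fun i => w i • X i) p) = (u.prod fun i e => w i ^ e) * coeff u p := by
  classical
  induction p using MvPolynomial.induction_on' with
  | monomial v c =>
    rw [aeval_smul_X_monomial, coeff_monomial, coeff_monomial]
    split_ifs with h
    · rw [h]
    · rw [mul_zero]
  | add p q hp hq => rw [map_add, coeff_add, hp, hq, coeff_add, mul_add]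

theorem prod_pow_eq_one_of_aeval_smul_X_eq_self [IsRightCancelMulZero R] {w : σ → R}
    {p : MvPolynomial σ R} (hp : aeval (fun i => w i • X i) p = p) {u : σ →₀ ℕ}
    (hu : coeff u p ≠ 0) : (u.prod fun i e => w i ^ e) = 1 := by
  have h := coeff_aeval_smul_X w p u
  rw [hp] at h
  exact mul_right_cancel₀ hu (by rw [← h, one_mul])

theorem eq_smul_sum_monomial_of_support_subset_range {ι : Type*} [Fintype ι]
    {f : ι → σ →₀ ℕ} (hf : Function.Injective f) {p : MvPolynomial σ R}
    (hsupp : ∀ u ∈ p.support, ∃ i, f i = u) {a : R} (hcoeff : ∀ i, coeff (f i) p = a) :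
    p = a • ∑ i, monomial (f i) 1 := by
  classical
  have hsub : p.support ⊆ Finset.univ.image f := fun u hu => by simpa using hsupp u hu
  calc p = ∑ v ∈ p.support, monomial v (coeff v p) := p.as_sum
    _ = ∑ v ∈ Finset.univ.image f, monomial v (coeff v p) :=
      Finset.sum_subset hsub fun v _ hv => by rw [notMem_support_iff.mp hv, monomial_zero]
    _ = ∑ i, monomial (f i) (coeff (f i) p) := Finset.sum_image fun i _ j _ h => hf h
    _ = a • ∑ i, monomial (f i) 1 := by
      simp only [hcoeff, Finset.smul_sum, smul_monomial, smul_eq_mul, mul_one]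

end MvPolynomial

theorem isPrimitiveRoot_ε : IsPrimitiveRoot ε 7 := by
  simpa [ε] using Complex.isPrimitiveRoot_exp 7 (by norm_num)

theorem Dsub_eq_smul_X : Dsub = fun i => ![ε, ε ^ 4, ε ^ 2] i • X i := by
  funext i; fin_cases i <;> rfl

theorem Psub_eq_X_comp_finRotate : Psub = X ∘ finRotate 3 := by
  funext i; fin_cases i <;> rfl

def kleinExponent (i : Fin 3) : Fin 3 →₀ ℕ := Finsupp.single i 3 + Finsupp.single (i + 1) 1

theorem kleinExponent_apply_self (i : Fin 3) : kleinExponent i i = 3 := by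
  fin_cases i <;> simp [kleinExponent]

theorem kleinExponent_injective : Function.Injective kleinExponent := by
  intro i j h
  have := kleinExponent_apply_self i
  rw [h] at this
  fin_cases i <;> fin_cases j <;> simp_all [kleinExponent]

theorem fklein_eq_sum : fklein = ∑ i, monomial (kleinExponent i) 1 := by
  simp only [fklein, kleinExponent, Fin.sum_univ_three, monomial_single_add, ← X_pow_eq_monomial,
    pow_one]
  rfl

theorem mapDomain_finRotate_kleinExponent (i : Fin 3) :
    (kleinExponent i).mapDomain (finRotate 3) = kleinExponent (i + 1) := by
  simp [kleinExponent, Finsupp.mapDomain_add]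

theorem exists_kleinExponent_eq {u : Fin 3 →₀ ℕ} (hdeg : u 0 + u 1 + u 2 = 4)
    (hweight : 7 ∣ u 0 + 4 * u 1 + 2 * u 2) : ∃ i, kleinExponent i = u := by
  have hu₁ : u 1 ≤ 4 := by omega
  have key : (u 0 = 3 ∧ u 1 = 1 ∧ u 2 = 0) ∨ (u 0 = 0 ∧ u 1 = 3 ∧ u 2 = 1) ∨
      (u 0 = 1 ∧ u 1 = 0 ∧ u 2 = 3) := by
    interval_cases u 1 <;> omega
  rcases key with h | h | h
  · exact ⟨0, by ext j; fin_cases j <;> simp [kleinExponent, h]⟩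
  · exact ⟨1, by ext j; fin_cases j <;> simp [kleinExponent, h]⟩
  · exact ⟨2, by ext j; fin_cases j <;> simp [kleinExponent, h]⟩

section

variable {g : MvPolynomial (Fin 3) ℂ}

theorem seven_dvd_of_coeff_ne_zero (hD : aeval Dsub g = g) {u : Fin 3 →₀ ℕ}
    (hu : coeff u g ≠ 0) : 7 ∣ u 0 + 4 * u 1 + 2 * u 2 := by
  rw [Dsub_eq_smul_X] at hD
  have h := prod_pow_eq_one_of_aeval_smul_X_eq_self hD hu
  rw [Finsupp.prod_fintype _ _ fun _ => pow_zero _, Fin.prod_univ_three] at h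
  refine (isPrimitiveRoot_ε.pow_eq_one_iff_dvd _).mp ?_
  simpa [pow_add, pow_mul] using h

theorem coeff_kleinExponent_succ (hP : aeval Psub g = g) (i : Fin 3) :
    coeff (kleinExponent (i + 1)) g = coeff (kleinExponent i) g := by
  have hrename : rename (finRotate 3) g = g := by
    rw [rename_eq_aeval, ← Psub_eq_X_comp_finRotate, hP]
  have h := coeff_rename_mapDomain _ (finRotate 3).injective g (kleinExponent i)
  rwa [hrename, mapDomain_finRotate_kleinExponent] at h

theorem coeff_kleinExponent (hP : aeval Psub g = g) (i : Fin 3) :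
    coeff (kleinExponent i) g = coeff (kleinExponent 0) g := by
  have h1 := coeff_kleinExponent_succ hP 0
  have h2 := coeff_kleinExponent_succ hP 1
  fin_cases i
  · rfl
  · exact h1
  · exact h2.trans h1

theorem exists_kleinExponent_eq_of_coeff_ne_zero (hg : g.IsHomogeneous 4)
    (hD : aeval Dsub g = g) {u : Fin 3 →₀ ℕ} (hu : coeff u g ≠ 0) : ∃ i, kleinExponent i = u := by
  have hdeg : u 0 + u 1 + u 2 = 4 := by
    rw [← hg hu, Pi.one_def, ← Finsupp.degree_eq_weight_one, Finsupp.degree_eq_sum,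
      Fin.sum_univ_three]
  exact exists_kleinExponent_eq hdeg (seven_dvd_of_coeff_ne_zero hD hu)

end

theorem klein_quartic_unique_invariant_general (g : MvPolynomial (Fin 3) ℂ)
    (hg : g.IsHomogeneous 4)
    (hP : aeval Psub g = g) (hD : aeval Dsub g = g) :
    ∃ a : ℂ, g = a • fklein := by
  refine ⟨coeff (kleinExponent 0) g, ?_⟩
  rw [fklein_eq_sum]
  exact eq_smul_sum_monomial_of_support_subset_range kleinExponent_injective
    (fun u hu => exists_kleinExponent_eq_of_coeff_ne_zero hg hD (mem_support_iff.mp hu))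
    (coeff_kleinExponent hP)

/-- up to scalar, the Klein quartic is the only invariant
quartic: every homogeneous polynomial of degree 4 invariant under P, D and T
is a scalar multiple of f. -/
theorem klein_quartic_unique_invariant (g : MvPolynomial (Fin 3) ℂ)
    (hg : g.IsHomogeneous 4)
    (hP : aeval Psub g = g) (hD : aeval Dsub g = g) (hT : aeval Tsub g = g) :
    ∃ a : ℂ, g = a • fklein :=
  klein_quartic_unique_invariant_general g hg hP hD

end
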